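/- GPA guarantee when the hub is not exhausted: fix τ ∈ (0,1] and a threshold vector γ_1,…,γ_n with γ_i ∈ [0,1] and γ_i ≥ min{1, τ·p·c_i/w_i} for all i (the minimum interpreted as 1 when w_i = 0). Let ℓ be the allocation produced by the GPA policy and suppose s^end = s − Σ_i L_i > 0. Then for every feasible offline allocation ℓ* (nonnegative, with Σ_i Σ_t ℓ*_i^t ≤ s), cost(ℓ) ≤ (1 + (1 − τ)²/(4τ))·cost(ℓ*) + Σ_{i=1}^n 3p·(b_i + c_i). -/

import Mathlib

open Finset

/-- `stock b d ℓ t` is the post-replenishment stock `k^{t+1}` at a single site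
(with `stock b d ℓ 0 = k^1 = b`), under demands `d` and allocations `ℓ`. -/
noncomputable def stock (b : ℕ) (d : ℕ → ℕ) (ℓ : ℕ → ℝ) : ℕ → ℝ
  | 0 => (b : ℝ)
  | t + 1 => max (stock b d ℓ t - (d (t + 1) : ℝ)) 0 + ℓ (t + 1)

/-- Sitewise transport cost `Σ_{t=1}^T w_i ⌈ℓ_i^t / c_i⌉`. -/
noncomputable def transportCost (T : ℕ) (wi : ℝ) (ci : ℕ) (ℓ : ℕ → ℝ) : ℝ :=
  ∑ t ∈ Icc 1 T, wi * (⌈ℓ t / (ci : ℝ)⌉ : ℝ)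

/-- Sitewise lost-sales penalty `Σ_{t=1}^T p (d_i^t − k_i^t)_+`. -/
noncomputable def penaltyCost (T : ℕ) (p : ℝ) (b : ℕ) (d : ℕ → ℕ) (ℓ : ℕ → ℝ) : ℝ :=
  ∑ t ∈ Icc 1 T, p * max ((d t : ℝ) - stock b d ℓ (t - 1)) 0

/-- Total cost of an allocation. -/
noncomputable def totalCost {n : ℕ} (T : ℕ) (w : Fin n → ℝ) (c b : Fin n → ℕ)
    (p : ℝ) (d : Fin n → ℕ → ℕ) (ℓ : Fin n → ℕ → ℝ) : ℝ :=
  ∑ i, (transportCost T (w i) (c i) (ℓ i) + penaltyCost T p (b i) (d i) (ℓ i))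

/-- One time step of GPA: eligible sites are processed in index order; site `i` is
eligible if `r i < b i` and `Lprev i ≤ γ i * Dt i`; an eligible site requests
`⌈(b i − r i)/c i⌉` full shipments and receives the min of that and the remaining
hub supply. Returns the remaining supply and the per-site allocation. -/
noncomputable def gpaInner {n : ℕ} (b c : Fin n → ℕ) (γ : Fin n → ℝ)
    (Dt Lprev r : Fin n → ℕ) (rem : ℕ) : ℕ × (Fin n → ℕ) :=
  (List.finRange n).foldl
    (fun (st : ℕ × (Fin n → ℕ)) (i : Fin n) =>
      if r i < b i ∧ (Lprev i : ℝ) ≤ γ i * (Dt i : ℝ) then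
        let q : ℕ := (b i - r i + c i - 1) / c i
        let give : ℕ := min st.1 (c i * q)
        (st.1 - give, Function.update st.2 i give)
      else st)
    (rem, fun _ => 0)

/-- GPA state after `t` time steps: (remaining hub supply, current stocks `k^{t+1}`,
cumulative allocations `L^t`). Initially `(s, b, 0)`. -/
noncomputable def gpaState {n : ℕ} (b c : Fin n → ℕ) (γ : Fin n → ℝ)
    (d : Fin n → ℕ → ℕ) (s : ℕ) : ℕ → ℕ × (Fin n → ℕ) × (Fin n → ℕ)
  | 0 => (s, b, fun _ => 0)
  | t + 1 =>
    let st := gpaState b c γ d s t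
    let r : Fin n → ℕ := fun i => st.2.1 i - d i (t + 1)
    let Dt : Fin n → ℕ := fun i => ∑ u ∈ Icc 1 (t + 1), d i u
    let res := gpaInner b c γ Dt st.2.2 r st.1
    (res.1, fun i => r i + res.2 i, fun i => st.2.2 i + res.2 i)

/-- Cumulative GPA allocation `L_i^t`. -/
noncomputable def gpaL {n : ℕ} (b c : Fin n → ℕ) (γ : Fin n → ℝ)
    (d : Fin n → ℕ → ℕ) (s : ℕ) (i : Fin n) (t : ℕ) : ℕ :=
  (gpaState b c γ d s t).2.2 i

/-- Per-step GPA allocation `ℓ_i^t` (as a real number). -/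
noncomputable def gpaAlloc {n : ℕ} (b c : Fin n → ℕ) (γ : Fin n → ℝ)
    (d : Fin n → ℕ → ℕ) (s : ℕ) (i : Fin n) (t : ℕ) : ℝ :=
  ((gpaL b c γ d s i t - gpaL b c γ d s i (t - 1) : ℕ) : ℝ)


/-!
While the hub is not exhausted every eligible site receives its full request, so each site
evolves as if it were alone and the bound can be proved site by site, with
`D = D_i`, `L = L_i`, `v = w_i / c_i ≤ p`.

GPA ships only full trucks, so it pays transport `v L`. A shipment is sent only while
`L ≤ γ D` and brings fewer than `b + c` units, so `L ≤ γ D + b + c`. A sale is lost only at a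
site whose stock is below `b`, i.e. one that was refused replenishment because `L > γ D`; with
the flow balance this gives lost sales at most `(1 - γ) D + b + c`. Hence GPA pays at most
`(γ v + (1 - γ) p) D + 2 p (b + c)`. Any allocation pays at least `v` per unit of demand beyond
`b`, whether the unit is shipped or lost. Finally the threshold `γ ≥ min {1, τ p / v}` makes the
rate `γ v + (1 - γ) p` at most `(1 + (1 - τ)² / (4 τ)) v`.
-/

section Offline
variable {T : ℕ} {b : ℕ} {d : ℕ → ℕ} {ℓ ℓ' : ℕ → ℝ}

lemma stock_congr (h : ∀ t ∈ Icc 1 T, ℓ t = ℓ' t) :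
    ∀ t ≤ T, stock b d ℓ t = stock b d ℓ' t := by
  intro t ht
  induction t with
  | zero => rfl
  | succ t ih =>
    simp only [stock, ih (by omega), h (t + 1) (mem_Icc.mpr ⟨by omega, ht⟩)]

lemma transportCost_congr (w : ℝ) (c : ℕ) (h : ∀ t ∈ Icc 1 T, ℓ t = ℓ' t) :
    transportCost T w c ℓ = transportCost T w c ℓ' :=
  sum_congr rfl fun t ht => by rw [h t ht]

lemma penaltyCost_congr (p : ℝ) (h : ∀ t ∈ Icc 1 T, ℓ t = ℓ' t) :
    penaltyCost T p b d ℓ = penaltyCost T p b d ℓ' :=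
  sum_congr rfl fun t ht => by
    rw [stock_congr h (t - 1) (by have := (mem_Icc.mp ht).2; omega)]

lemma stock_nonneg (hℓ : ∀ t ∈ Icc 1 T, 0 ≤ ℓ t) : ∀ t ≤ T, 0 ≤ stock b d ℓ t := by
  intro t ht
  induction t with
  | zero => exact Nat.cast_nonneg b
  | succ t ih =>
    exact add_nonneg (le_max_right _ _) (hℓ (t + 1) (mem_Icc.mpr ⟨by omega, ht⟩))

lemma stock_add_sum_demand (t : ℕ) :
    stock b d ℓ t + ∑ u ∈ Icc 1 t, (d u : ℝ)
      = b + ∑ u ∈ Icc 1 t, ℓ u + ∑ u ∈ Icc 1 t, max ((d u : ℝ) - stock b d ℓ (u - 1)) 0 := by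
  induction t with
  | zero => simp [stock]
  | succ t ih =>
    simp only [sum_Icc_succ_top (Nat.le_add_left 1 t), stock, Nat.add_sub_cancel]
    have hsplit : max (stock b d ℓ t - d (t + 1)) 0
        = stock b d ℓ t - d (t + 1) + max ((d (t + 1) : ℝ) - stock b d ℓ t) 0 := by
      rcases le_total (stock b d ℓ t) (d (t + 1)) with h | h
      · rw [max_eq_right (by linarith), max_eq_left (by linarith)]; ring
      · rw [max_eq_left (by linarith), max_eq_right (by linarith)]; ring
    linarith

lemma penaltyCost_nonneg {p : ℝ} (hp : 0 ≤ p) : 0 ≤ penaltyCost T p b d ℓ :=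
  sum_nonneg fun _ _ => mul_nonneg hp (le_max_right _ _)

lemma mul_sub_le_penaltyCost {p : ℝ} (hp : 0 ≤ p) (hℓ : ∀ t ∈ Icc 1 T, 0 ≤ ℓ t) :
    p * (∑ u ∈ Icc 1 T, (d u : ℝ) - b - ∑ u ∈ Icc 1 T, ℓ u) ≤ penaltyCost T p b d ℓ := by
  rw [penaltyCost, ← mul_sum]
  have := stock_add_sum_demand (b := b) (d := d) (ℓ := ℓ) T
  have := stock_nonneg (b := b) (d := d) hℓ T le_rfl
  exact mul_le_mul_of_nonneg_left (by linarith) hp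

lemma mul_sum_le_transportCost {w : ℝ} (hw : 0 ≤ w) (c : ℕ) :
    w / c * ∑ t ∈ Icc 1 T, ℓ t ≤ transportCost T w c ℓ := by
  rw [mul_sum]
  refine sum_le_sum fun t _ => ?_
  rw [div_mul_comm, mul_comm]
  exact mul_le_mul_of_nonneg_left (Int.le_ceil _) hw

/-- Every unit of demand beyond the initial stock is either shipped, at a cost of at least
`w / c` per unit, or lost, at a cost of `p ≥ w / c`. -/
lemma mul_sub_le_cost {w p : ℝ} {c : ℕ} (hw : 0 ≤ w) (hvp : w / c ≤ p)
    (hℓ : ∀ t ∈ Icc 1 T, 0 ≤ ℓ t) :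
    w / c * (∑ u ∈ Icc 1 T, (d u : ℝ) - b) ≤ transportCost T w c ℓ + penaltyCost T p b d ℓ := by
  have hv : 0 ≤ w / c := div_nonneg hw c.cast_nonneg
  have hp : 0 ≤ p := hv.trans hvp
  have htr := mul_sum_le_transportCost (T := T) (ℓ := ℓ) hw c
  have hpen := mul_sub_le_penaltyCost (b := b) (d := d) hp hℓ
  have hpen0 := penaltyCost_nonneg (T := T) (b := b) (d := d) (ℓ := ℓ) hp
  rcases le_total (∑ u ∈ Icc 1 T, (d u : ℝ) - b) (∑ t ∈ Icc 1 T, ℓ t) with h | h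
  · nlinarith [mul_le_mul_of_nonneg_left h hv]
  · nlinarith [mul_le_mul_of_nonneg_right hvp (sub_nonneg.mpr h)]

lemma cost_nonneg {w p : ℝ} {c : ℕ} (hw : 0 ≤ w) (hp : 0 ≤ p)
    (hℓ : ∀ t ∈ Icc 1 T, 0 ≤ ℓ t) :
    0 ≤ transportCost T w c ℓ + penaltyCost T p b d ℓ :=
  add_nonneg
    ((mul_nonneg (div_nonneg hw c.cast_nonneg) (sum_nonneg hℓ)).trans
      (mul_sum_le_transportCost hw c))
    (penaltyCost_nonneg hp)

end Offline

lemma threshold_rate_le {v p γ τ : ℝ} (hv : 0 ≤ v) (hvp : v ≤ p) (hτ : 0 < τ)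
    (hγ : γ = 1 ∨ τ * p ≤ γ * v) :
    γ * v + (1 - γ) * p ≤ (1 + (1 - τ) ^ 2 / (4 * τ)) * v := by
  have hα : 4 * τ * (1 + (1 - τ) ^ 2 / (4 * τ)) = (1 + τ) ^ 2 := by field_simp; ring
  rcases hγ with rfl | hγ
  · have : 0 ≤ (1 - τ) ^ 2 / (4 * τ) := by positivity
    nlinarith
  rcases hv.eq_or_lt with rfl | hv
  · have : p = 0 := by nlinarith
    subst this; simp
  -- multiplied by `4 τ v`, the claim is `((1 + τ) v - 2 τ p)² ≥ 0`
  refine le_of_mul_le_mul_left ?_ (by positivity : 0 < 4 * τ * v)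
  calc 4 * τ * v * (γ * v + (1 - γ) * p) = 4 * τ * (p * v - γ * v * (p - v)) := by ring
    _ ≤ 4 * τ * (p * v - τ * p * (p - v)) := by gcongr
    _ = (1 + τ) ^ 2 * v ^ 2 - ((1 + τ) * v - 2 * τ * p) ^ 2 := by ring
    _ ≤ 4 * τ * v * ((1 + (1 - τ) ^ 2 / (4 * τ)) * v) := by
      rw [show 4 * τ * v * ((1 + (1 - τ) ^ 2 / (4 * τ)) * v)
          = 4 * τ * (1 + (1 - τ) ^ 2 / (4 * τ)) * v ^ 2 by ring, hα]
      nlinarith [sq_nonneg ((1 + τ) * v - 2 * τ * p)]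

lemma mul_le_of_rate_le {R v p α D b C : ℝ} (hp : 0 ≤ p) (hb : 0 ≤ b) (hD : 0 ≤ D) (hα : 0 ≤ α)
    (hRv : R ≤ α * v) (hRp : R ≤ p) (hC0 : 0 ≤ C) (hC : v * (D - b) ≤ C) :
    R * D ≤ α * C + p * b := by
  rcases le_total D b with h | h
  · nlinarith [mul_le_mul_of_nonneg_right hRp hD, mul_le_mul_of_nonneg_left h hp]
  · nlinarith [mul_le_mul_of_nonneg_right hRv (sub_nonneg.mpr h),
      mul_le_mul_of_nonneg_right hRp hb, mul_le_mul_of_nonneg_left hC hα]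

/-- `c_i q_i^t` for a site with `r_i^t = r`, `L_i^{t-1} = L`, `D_i^t = D` (and `0` if it is not
eligible): what GPA ships to it when the hub can cover the request. -/
noncomputable def gpaRequest (b c : ℕ) (γ : ℝ) (D L r : ℕ) : ℕ :=
  if r < b ∧ (L : ℝ) ≤ γ * D then c * ((b - r + c - 1) / c) else 0

section Request
variable {b c : ℕ} {γ : ℝ} {D L r : ℕ}

lemma dvd_gpaRequest : c ∣ gpaRequest b c γ D L r := by
  unfold gpaRequest; split_ifs
  · exact dvd_mul_right _ _
  · exact dvd_zero _

lemma gpaRequest_le : gpaRequest b c γ D L r ≤ b - r + c - 1 := by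
  unfold gpaRequest; split_ifs
  · exact Nat.mul_div_le _ _
  · exact Nat.zero_le _

lemma le_gpaRequest (hc : 0 < c) (hr : r < b) (hL : (L : ℝ) ≤ γ * D) :
    b - r ≤ gpaRequest b c γ D L r := by
  rw [gpaRequest, if_pos ⟨hr, hL⟩]
  have := Nat.div_add_mod (b - r + c - 1) c
  have := Nat.mod_lt (b - r + c - 1) hc
  omega

lemma gpaRequest_eq_zero (h : ¬(r < b ∧ (L : ℝ) ≤ γ * D)) : gpaRequest b c γ D L r = 0 :=
  if_neg h

end Request

lemma natCast_sub_eq_max (a e : ℕ) : ((a - e : ℕ) : ℝ) = max ((a : ℝ) - e) 0 := by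
  rcases le_total e a with h | h
  · rw [Nat.cast_sub h, max_eq_left (sub_nonneg.mpr (Nat.cast_le.mpr h))]
  · rw [Nat.sub_eq_zero_of_le h, Nat.cast_zero, max_eq_right (sub_nonpos.mpr (Nat.cast_le.mpr h))]

def cumDemand (d : ℕ → ℕ) (t : ℕ) : ℕ := ∑ u ∈ Icc 1 t, d u

lemma cumDemand_succ (d : ℕ → ℕ) (t : ℕ) : cumDemand d (t + 1) = cumDemand d t + d (t + 1) :=
  sum_Icc_succ_top (Nat.le_add_left 1 t) d

section Site
variable (b c : ℕ) (γ : ℝ) (d : ℕ → ℕ)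

/-- A single site run by GPA from an inexhaustible hub: `(k^{t+1}, L^t)`. -/
noncomputable def siteRun : ℕ → ℕ × ℕ
  | 0 => (b, 0)
  | t + 1 =>
    let r := (siteRun t).1 - d (t + 1)
    let x := gpaRequest b c γ (cumDemand d (t + 1)) (siteRun t).2 r
    (r + x, (siteRun t).2 + x)

noncomputable def siteShipment (t : ℕ) : ℕ :=
  gpaRequest b c γ (cumDemand d (t + 1)) (siteRun b c γ d t).2 ((siteRun b c γ d t).1 - d (t + 1))

lemma siteRun_succ (t : ℕ) :
    siteRun b c γ d (t + 1) = ((siteRun b c γ d t).1 - d (t + 1) + siteShipment b c γ d t,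
      (siteRun b c γ d t).2 + siteShipment b c γ d t) := rfl

noncomputable def siteLost (t : ℕ) : ℕ := ∑ u ∈ Icc 1 t, (d u - (siteRun b c γ d (u - 1)).1)

noncomputable def siteAlloc (t : ℕ) : ℝ :=
  (((siteRun b c γ d t).2 - (siteRun b c γ d (t - 1)).2 : ℕ) : ℝ)

lemma siteAlloc_succ (t : ℕ) : siteAlloc b c γ d (t + 1) = siteShipment b c γ d t := by
  simp [siteAlloc, siteRun_succ]

lemma stock_siteAlloc (t : ℕ) : stock b d (siteAlloc b c γ d) t = (siteRun b c γ d t).1 := by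
  induction t with
  | zero => rfl
  | succ t ih =>
    rw [stock, ih, siteAlloc_succ, siteRun_succ]
    push_cast
    rw [natCast_sub_eq_max]

lemma sum_siteAlloc (t : ℕ) : ∑ u ∈ Icc 1 t, siteAlloc b c γ d u = (siteRun b c γ d t).2 := by
  induction t with
  | zero => simp [siteRun]
  | succ t ih =>
    rw [sum_Icc_succ_top (Nat.le_add_left 1 t), ih, siteAlloc_succ, siteRun_succ]
    push_cast; ring

lemma transportCost_siteAlloc (T : ℕ) (w : ℝ) (hc : 0 < c) :
    transportCost T w c (siteAlloc b c γ d) = w / c * (siteRun b c γ d T).2 := by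
  rw [← sum_siteAlloc, mul_sum, transportCost]
  refine sum_congr rfl fun t ht => ?_
  obtain ⟨u, rfl⟩ : ∃ u, t = u + 1 := ⟨t - 1, by have := (mem_Icc.mp ht).1; omega⟩
  obtain ⟨m, hm⟩ := dvd_gpaRequest (b := b) (c := c) (γ := γ) (D := cumDemand d (u + 1))
    (L := (siteRun b c γ d u).2) (r := (siteRun b c γ d u).1 - d (u + 1))
  have hc' : (c : ℝ) ≠ 0 := by positivity
  rw [siteAlloc_succ, siteShipment, hm, Nat.cast_mul, mul_div_cancel_left₀ _ hc',
    Int.ceil_natCast, Int.cast_natCast]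
  field_simp

lemma penaltyCost_siteAlloc (T : ℕ) (p : ℝ) :
    penaltyCost T p b d (siteAlloc b c γ d) = p * siteLost b c γ d T := by
  rw [penaltyCost, siteLost, Nat.cast_sum, mul_sum]
  refine sum_congr rfl fun t _ => ?_
  rw [stock_siteAlloc, natCast_sub_eq_max]

end Site

section SiteBounds
variable {b c : ℕ} {γ : ℝ} {d : ℕ → ℕ}

lemma siteLost_succ (t : ℕ) :
    siteLost b c γ d (t + 1) = siteLost b c γ d t + (d (t + 1) - (siteRun b c γ d t).1) :=
  sum_Icc_succ_top (Nat.le_add_left 1 t) _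

lemma siteRun_balance (t : ℕ) :
    (siteRun b c γ d t).1 + cumDemand d t = b + (siteRun b c γ d t).2 + siteLost b c γ d t := by
  induction t with
  | zero => simp [siteRun, siteLost, cumDemand]
  | succ t ih =>
    rw [siteRun_succ, cumDemand_succ, siteLost_succ]
    omega

lemma siteRun_fst_le (hc : 0 < c) (t : ℕ) : (siteRun b c γ d t).1 ≤ b + c - 1 := by
  induction t with
  | zero => simp only [siteRun]; omega
  | succ t ih =>
    rw [siteRun_succ, siteShipment]
    by_cases h : (siteRun b c γ d t).1 - d (t + 1) < b ∧
        ((siteRun b c γ d t).2 : ℝ) ≤ γ * cumDemand d (t + 1)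
    · have := gpaRequest_le (b := b) (c := c) (γ := γ) (D := cumDemand d (t + 1))
        (L := (siteRun b c γ d t).2) (r := (siteRun b c γ d t).1 - d (t + 1))
      omega
    · rw [gpaRequest_eq_zero h]; omega

/-- An eligible site is refilled to at least `b`. -/
lemma lt_siteRun_snd (hc : 0 < c) {t : ℕ} (hk : (siteRun b c γ d (t + 1)).1 < b) :
    γ * cumDemand d (t + 1) < (siteRun b c γ d (t + 1)).2 := by
  rw [siteRun_succ, siteShipment] at hk ⊢
  by_cases h : (siteRun b c γ d t).1 - d (t + 1) < b ∧
      ((siteRun b c γ d t).2 : ℝ) ≤ γ * cumDemand d (t + 1)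
  · have := le_gpaRequest hc h.1 h.2
    omega
  · simp only [gpaRequest_eq_zero h, add_zero] at hk ⊢
    push Not at h
    exact_mod_cast h hk

lemma siteRun_snd_le (hγ : 0 ≤ γ) (t : ℕ) :
    ((siteRun b c γ d t).2 : ℝ) ≤ γ * cumDemand d t + (b + c) := by
  induction t with
  | zero => simp only [siteRun]; push_cast; positivity
  | succ t ih =>
    have hD : (cumDemand d t : ℝ) ≤ cumDemand d (t + 1) := by
      exact_mod_cast (cumDemand_succ d t).symm ▸ Nat.le_add_right _ _
    rw [siteRun_succ, siteShipment, Nat.cast_add]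
    by_cases h : (siteRun b c γ d t).1 - d (t + 1) < b ∧
        ((siteRun b c γ d t).2 : ℝ) ≤ γ * cumDemand d (t + 1)
    · have : (gpaRequest b c γ (cumDemand d (t + 1)) (siteRun b c γ d t).2
          ((siteRun b c γ d t).1 - d (t + 1)) : ℝ) ≤ b + c := by
        exact_mod_cast gpaRequest_le.trans (by omega)
      linarith [h.2]
    · rw [gpaRequest_eq_zero h, Nat.cast_zero, add_zero]
      nlinarith

lemma siteLost_le (hc : 0 < c) (hγ : γ ≤ 1) {t : ℕ} (hd : ∀ u ∈ Icc 1 t, d u ≤ b) :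
    (siteLost b c γ d t : ℝ) ≤ (1 - γ) * cumDemand d t + (b + c) := by
  induction t with
  | zero => simp [siteLost]; positivity
  | succ t ih =>
    have hdb : (d (t + 1) : ℝ) ≤ b := by
      exact_mod_cast hd (t + 1) (mem_Icc.mpr ⟨Nat.le_add_left 1 t, le_rfl⟩)
    have hD : (cumDemand d (t + 1) : ℝ) = cumDemand d t + d (t + 1) := by
      exact_mod_cast cumDemand_succ d t
    by_cases hk : b ≤ (siteRun b c γ d t).1
    · have hstep : siteLost b c γ d (t + 1) = siteLost b c γ d t := by
        have : d (t + 1) ≤ b := by exact_mod_cast hdb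
        rw [siteLost_succ]; omega
      have := ih fun u hu => hd u (Icc_subset_Icc_right (Nat.le_succ t) hu)
      rw [hstep]
      nlinarith [(d (t + 1)).cast_nonneg (α := ℝ)]
    · -- `k^t < b` means the site was refused replenishment at step `t`, so `L^t > γ D^t`;
      -- the flow balance at `t + 1` then bounds the lost sales
      obtain ⟨u, rfl⟩ : ∃ u, t = u + 1 :=
        Nat.exists_eq_succ_of_ne_zero (by rintro rfl; exact hk le_rfl)
      have hL := lt_siteRun_snd hc (not_le.mp hk)
      have hbal : ((siteRun b c γ d (u + 1 + 1)).1 : ℝ) + cumDemand d (u + 1 + 1)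
          = b + (siteRun b c γ d (u + 1 + 1)).2 + siteLost b c γ d (u + 1 + 1) := by
        exact_mod_cast siteRun_balance (u + 1 + 1)
      have hk2 : ((siteRun b c γ d (u + 1 + 1)).1 : ℝ) + 1 ≤ b + c := by
        have := siteRun_fst_le (b := b) (γ := γ) (d := d) hc (u + 1 + 1)
        exact_mod_cast (by omega : (siteRun b c γ d (u + 1 + 1)).1 + 1 ≤ b + c)
      have hmono : ((siteRun b c γ d (u + 1)).2 : ℝ) ≤ (siteRun b c γ d (u + 1 + 1)).2 := by
        exact_mod_cast Nat.le_add_right _ _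
      have hγd : γ * d (u + 1 + 1) ≤ b := by nlinarith [(d (u + 1 + 1)).cast_nonneg (α := ℝ)]
      rw [hD]
      linarith
end SiteBounds

section Inner
variable {n : ℕ} (b c : Fin n → ℕ) (γ : Fin n → ℝ) (Dt Lprev r : Fin n → ℕ)

noncomputable def gpaStep (st : ℕ × (Fin n → ℕ)) (i : Fin n) : ℕ × (Fin n → ℕ) :=
  if r i < b i ∧ (Lprev i : ℝ) ≤ γ i * (Dt i : ℝ) then
    let give := min st.1 (c i * ((b i - r i + c i - 1) / c i))
    (st.1 - give, Function.update st.2 i give)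
  else st

lemma gpaInner_eq_foldl (rem : ℕ) :
    gpaInner b c γ Dt Lprev r rem
      = (List.finRange n).foldl (gpaStep b c γ Dt Lprev r) (rem, fun _ => 0) := rfl

variable {b c γ Dt Lprev r}

lemma gpaStep_snd_of_ne {st : ℕ × (Fin n → ℕ)} {i j : Fin n} (h : j ≠ i) :
    (gpaStep b c γ Dt Lprev r st i).2 j = st.2 j := by
  unfold gpaStep; split
  · exact Function.update_of_ne h _ _
  · rfl

lemma foldl_gpaStep_snd_of_not_mem {l : List (Fin n)} {j : Fin n} (h : j ∉ l)
    (st : ℕ × (Fin n → ℕ)) : (l.foldl (gpaStep b c γ Dt Lprev r) st).2 j = st.2 j := by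
  induction l generalizing st with
  | nil => rfl
  | cons a l ih =>
    rw [List.foldl_cons, ih (fun hj => h (List.mem_cons_of_mem a hj)),
      gpaStep_snd_of_ne fun hj => h (by rw [hj]; exact List.mem_cons_self)]

lemma foldl_gpaStep_fst_le (l : List (Fin n)) (st : ℕ × (Fin n → ℕ)) :
    (l.foldl (gpaStep b c γ Dt Lprev r) st).1 ≤ st.1 := by
  induction l generalizing st with
  | nil => exact le_rfl
  | cons a l ih =>
    refine (ih _).trans ?_
    unfold gpaStep; split
    · exact Nat.sub_le _ _
    · exact le_rfl

lemma foldl_gpaStep_fst_add_sum {l : List (Fin n)} (hl : l.Nodup) {st : ℕ × (Fin n → ℕ)}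
    (hst : ∀ j ∈ l, st.2 j = 0) :
    (l.foldl (gpaStep b c γ Dt Lprev r) st).1 + ∑ j, (l.foldl (gpaStep b c γ Dt Lprev r) st).2 j
      = st.1 + ∑ j, st.2 j := by
  induction l generalizing st with
  | nil => rfl
  | cons a l ih =>
    obtain ⟨ha, hl⟩ := List.nodup_cons.mp hl
    rw [List.foldl_cons, ih hl fun j hj => by
      rw [gpaStep_snd_of_ne fun h => ha (by rwa [← h])]; exact hst j (List.mem_cons_of_mem a hj)]
    unfold gpaStep; split
    · dsimp only
      rw [sum_update_of_mem (mem_univ a), ← erase_eq, sum_erase _ (hst a List.mem_cons_self)]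
      have := min_le_left st.1 (c a * ((b a - r a + c a - 1) / c a))
      omega
    · rfl

lemma foldl_gpaStep_snd_of_pos {l : List (Fin n)} (hl : l.Nodup) {st : ℕ × (Fin n → ℕ)}
    (hst : ∀ j ∈ l, st.2 j = 0) (hpos : 0 < (l.foldl (gpaStep b c γ Dt Lprev r) st).1) :
    ∀ i ∈ l, (l.foldl (gpaStep b c γ Dt Lprev r) st).2 i
      = gpaRequest (b i) (c i) (γ i) (Dt i) (Lprev i) (r i) := by
  induction l generalizing st with
  | nil => simp
  | cons a l ih =>
    obtain ⟨ha, hl⟩ := List.nodup_cons.mp hl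
    rw [List.foldl_cons] at hpos ⊢
    intro i hi
    rcases List.mem_cons.mp hi with rfl | hi
    · rw [foldl_gpaStep_snd_of_not_mem ha]
      have hle := foldl_gpaStep_fst_le (b := b) (c := c) (γ := γ) (Dt := Dt) (Lprev := Lprev)
        (r := r) l (gpaStep b c γ Dt Lprev r st i)
      unfold gpaStep gpaRequest at *
      split_ifs at * with h
      · simp only [Function.update_self] at *
        omega
      · exact hst i List.mem_cons_self
    · exact ih hl (fun j hj => by
        rw [gpaStep_snd_of_ne fun h => ha (by rwa [← h])]; exact hst j (List.mem_cons_of_mem a hj))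
        hpos i hi

lemma gpaInner_fst_add_sum (rem : ℕ) :
    (gpaInner b c γ Dt Lprev r rem).1 + ∑ j, (gpaInner b c γ Dt Lprev r rem).2 j = rem := by
  rw [gpaInner_eq_foldl]
  simpa using foldl_gpaStep_fst_add_sum (b := b) (c := c) (γ := γ) (Dt := Dt) (Lprev := Lprev)
    (r := r) (List.nodup_finRange n) (st := (rem, fun _ => 0)) fun _ _ => rfl

lemma gpaInner_snd_of_pos {rem : ℕ} (hpos : 0 < (gpaInner b c γ Dt Lprev r rem).1) (i : Fin n) :
    (gpaInner b c γ Dt Lprev r rem).2 i = gpaRequest (b i) (c i) (γ i) (Dt i) (Lprev i) (r i) :=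
  foldl_gpaStep_snd_of_pos (List.nodup_finRange n) (fun _ _ => rfl) hpos i (List.mem_finRange i)

end Inner

section State
variable {n : ℕ} (b c : Fin n → ℕ) (γ : Fin n → ℝ) (d : Fin n → ℕ → ℕ) (s : ℕ)

noncomputable def gpaSupply (t : ℕ) : ℕ := (gpaState b c γ d s t).1

lemma gpaSupply_add_sum_gpaL (t : ℕ) : gpaSupply b c γ d s t + ∑ i, gpaL b c γ d s i t = s := by
  induction t with
  | zero => simp [gpaSupply, gpaL, gpaState]
  | succ t ih =>
    have := gpaInner_fst_add_sum (b := b) (c := c) (γ := γ)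
      (Dt := fun i => ∑ u ∈ Icc 1 (t + 1), d i u) (Lprev := (gpaState b c γ d s t).2.2)
      (r := fun i => (gpaState b c γ d s t).2.1 i - d i (t + 1)) (gpaState b c γ d s t).1
    simp only [gpaSupply, gpaL, gpaState, sum_add_distrib] at ih ⊢
    omega

lemma gpaSupply_antitone : Antitone (gpaSupply b c γ d s) := by
  refine antitone_nat_of_succ_le fun t => ?_
  have hL : ∑ i, gpaL b c γ d s i t ≤ ∑ i, gpaL b c γ d s i (t + 1) :=
    sum_le_sum fun _ _ => Nat.le_add_right _ _
  have := gpaSupply_add_sum_gpaL b c γ d s t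
  have := gpaSupply_add_sum_gpaL b c γ d s (t + 1)
  omega

variable {b c γ d s}

lemma gpaState_eq_siteRun {T : ℕ} (hT : 0 < gpaSupply b c γ d s T) (i : Fin n) {t : ℕ}
    (ht : t ≤ T) :
    (gpaState b c γ d s t).2.1 i = (siteRun (b i) (c i) (γ i) (d i) t).1 ∧
      gpaL b c γ d s i t = (siteRun (b i) (c i) (γ i) (d i) t).2 := by
  induction t with
  | zero => exact ⟨rfl, rfl⟩
  | succ t ih =>
    obtain ⟨hk, hL⟩ := ih (by omega)
    have hpos : 0 < gpaSupply b c γ d s (t + 1) := hT.trans_le (gpaSupply_antitone b c γ d s ht)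
    have hfull := gpaInner_snd_of_pos hpos i
    simp only [gpaL, gpaState] at hL hfull ⊢
    rw [hfull, hk, hL]
    exact ⟨rfl, rfl⟩

lemma gpaAlloc_eq_siteAlloc {T : ℕ} (hT : 0 < gpaSupply b c γ d s T) (i : Fin n) {t : ℕ}
    (ht : t ≤ T) : gpaAlloc b c γ d s i t = siteAlloc (b i) (c i) (γ i) (d i) t := by
  rw [gpaAlloc, siteAlloc, (gpaState_eq_siteRun hT i ht).2,
    (gpaState_eq_siteRun hT i (t.sub_le 1 |>.trans ht)).2]

end State

lemma eq_one_or_mul_le_of_threshold_le {w p τ γ : ℝ} {c : ℕ} (hc : 0 < c) (hw : 0 ≤ w)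
    (hγ : γ ≤ 1) (h : (if w = 0 then (1 : ℝ) else min 1 (τ * p * c / w)) ≤ γ) :
    γ = 1 ∨ τ * p ≤ γ * (w / c) := by
  split_ifs at h with hw0
  · exact .inl (le_antisymm hγ h)
  rcases min_le_iff.mp h with h | h
  · exact .inl (le_antisymm hγ h)
  · right
    rw [div_le_iff₀ (lt_of_le_of_ne hw (Ne.symm hw0))] at h
    rw [mul_div_assoc', le_div_iff₀ (by exact_mod_cast hc)]
    linarith

theorem siteAlloc_cost_le {T b c : ℕ} {w p γ τ : ℝ} {d : ℕ → ℕ} {ℓ : ℕ → ℝ} (hc : 0 < c)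
    (hw : 0 ≤ w) (hvp : w / c ≤ p) (hγ0 : 0 ≤ γ) (hγ1 : γ ≤ 1) (hτ : 0 < τ)
    (hγτ : γ = 1 ∨ τ * p ≤ γ * (w / c)) (hd : ∀ t ∈ Icc 1 T, d t ≤ b)
    (hℓ : ∀ t ∈ Icc 1 T, 0 ≤ ℓ t) :
    transportCost T w c (siteAlloc b c γ d) + penaltyCost T p b d (siteAlloc b c γ d)
      ≤ (1 + (1 - τ) ^ 2 / (4 * τ)) * (transportCost T w c ℓ + penaltyCost T p b d ℓ)
        + 3 * p * (b + c) := by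
  have hv : 0 ≤ w / c := div_nonneg hw c.cast_nonneg
  have hp : 0 ≤ p := hv.trans hvp
  have hL := siteRun_snd_le (b := b) (c := c) (d := d) hγ0 T
  have hLost := siteLost_le hc hγ1 hd
  have hopt := mul_sub_le_cost (b := b) (d := d) hw hvp hℓ
  rw [show ∑ u ∈ Icc 1 T, (d u : ℝ) = cumDemand d T by simp [cumDemand]] at hopt
  rw [transportCost_siteAlloc b c γ d T w hc, penaltyCost_siteAlloc]
  calc w / c * (siteRun b c γ d T).2 + p * siteLost b c γ d T
      ≤ w / c * (γ * cumDemand d T + (b + c)) + p * ((1 - γ) * cumDemand d T + (b + c)) := by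
        gcongr
    _ = (γ * (w / c) + (1 - γ) * p) * cumDemand d T + (w / c + p) * (b + c) := by ring
    _ ≤ ((1 + (1 - τ) ^ 2 / (4 * τ)) * (transportCost T w c ℓ + penaltyCost T p b d ℓ)
          + p * b) + (p + p) * (b + c) := by
        gcongr
        exact mul_le_of_rate_le hp b.cast_nonneg (cumDemand d T).cast_nonneg (by positivity)
          (threshold_rate_le hv hvp hτ hγτ) (by nlinarith) (cost_nonneg hw hp hℓ) hopt
    _ ≤ _ := by nlinarith [c.cast_nonneg (α := ℝ)]

theorem gpa_guarantee_not_exhausted_general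
    (n T : ℕ) (c b : Fin n → ℕ) (hc : ∀ i, 1 ≤ c i)
    (w : Fin n → ℝ) (hw : ∀ i, 0 ≤ w i)
    (p : ℝ) (hwp : ∀ i, w i ≤ p * c i)
    (s : ℕ) (d : Fin n → ℕ → ℕ) (hd : ∀ i, ∀ t ∈ Icc 1 T, d i t ≤ b i)
    (τ : ℝ) (hτ0 : 0 < τ)
    (γ : Fin n → ℝ) (hγ : ∀ i, 0 ≤ γ i ∧ γ i ≤ 1)
    (hγlb : ∀ i, (if w i = 0 then (1 : ℝ) else min 1 (τ * p * c i / w i)) ≤ γ i)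
    (ℓ : Fin n → ℕ → ℝ) (hℓ : ℓ = fun i t => gpaAlloc b c γ d s i t)
    (hend : (∑ i, gpaL b c γ d s i T) < s)
    (ℓs : Fin n → ℕ → ℝ) (hℓs : ∀ i, ∀ t ∈ Icc 1 T, 0 ≤ ℓs i t)
    :
    totalCost T w c b p d ℓ
      ≤ (1 + (1 - τ) ^ 2 / (4 * τ)) * totalCost T w c b p d ℓs
        + ∑ i, 3 * p * ((b i : ℝ) + c i) := by
  subst hℓ
  have hT : 0 < gpaSupply b c γ d s T := by
    have := gpaSupply_add_sum_gpaL b c γ d s T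
    omega
  rw [totalCost, totalCost, mul_sum, ← sum_add_distrib]
  refine sum_le_sum fun i _ => ?_
  have hagree (t : ℕ) (ht : t ∈ Icc 1 T) :
      gpaAlloc b c γ d s i t = siteAlloc (b i) (c i) (γ i) (d i) t :=
    gpaAlloc_eq_siteAlloc hT i (mem_Icc.mp ht).2
  have hci : (0 : ℝ) < c i := by exact_mod_cast hc i
  rw [transportCost_congr _ _ hagree, penaltyCost_congr _ hagree]
  exact siteAlloc_cost_le (hc i) (hw i) ((div_le_iff₀ hci).mpr (hwp i)) (hγ i).1 (hγ i).2 hτ0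
    (eq_one_or_mul_le_of_threshold_le (hc i) (hw i) (hγ i).2 (hγlb i)) (hd i) (hℓs i)

/-- **GPA guarantee when the hub is not exhausted.** Fix `τ ∈ (0,1]` and
thresholds with `γ i ≥ min{1, τ·p·c_i/w_i}` (interpreted as `1` when `w i = 0`).
If `s^end > 0`, then for every feasible offline allocation `ℓ*`,
`cost(ℓ) ≤ (1 + (1−τ)²/(4τ))·cost(ℓ*) + Σ_i 3p(b_i + c_i)`. -/
theorem gpa_guarantee_not_exhausted
    (n T : ℕ) (c b : Fin n → ℕ) (hc : ∀ i, 1 ≤ c i)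
    (w : Fin n → ℝ) (hw : ∀ i, 0 ≤ w i)
    (p : ℝ) (hp : 0 ≤ p) (hwp : ∀ i, w i ≤ p * c i)
    (s : ℕ) (d : Fin n → ℕ → ℕ) (hd : ∀ i, ∀ t ∈ Icc 1 T, d i t ≤ b i)
    (τ : ℝ) (hτ0 : 0 < τ) (hτ1 : τ ≤ 1)
    (γ : Fin n → ℝ) (hγ : ∀ i, 0 ≤ γ i ∧ γ i ≤ 1)
    (hγlb : ∀ i, (if w i = 0 then (1 : ℝ) else min 1 (τ * p * c i / w i)) ≤ γ i)
    (ℓ : Fin n → ℕ → ℝ) (hℓ : ℓ = fun i t => gpaAlloc b c γ d s i t)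
    (hend : (∑ i, gpaL b c γ d s i T) < s)
    (ℓs : Fin n → ℕ → ℝ) (hℓs : ∀ i, ∀ t ∈ Icc 1 T, 0 ≤ ℓs i t)
    (hfeas : ∑ i, ∑ t ∈ Icc 1 T, ℓs i t ≤ (s : ℝ))
    :
    totalCost T w c b p d ℓ
      ≤ (1 + (1 - τ) ^ 2 / (4 * τ)) * totalCost T w c b p d ℓs
        + ∑ i, 3 * p * ((b i : ℝ) + c i) :=
  gpa_guarantee_not_exhausted_general n T c b hc w hw p hwp s d hd τ hτ0 γ hγ hγlb ℓ hℓ hend ℓs hℓs
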